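/- arXiv:1501.05979 — 10 statements merged into one kernel-verified Lean document; each statement's English description precedes it below -/
import Mathlib

section
/- Let λ₁ > 0. For all real numbers λ ≥ λ₁ and all τ, ξ, η ∈ ℝ such that | |τ| − √λ | ≥ 10⁻³·√λ, one has Γ_λ(τ, ξ, η) ≥ (2·10⁻³ − 10⁻⁶)²·λ₁²·ξ². -/
/-- For real `λ τ ξ η`, the quantity `Γ_λ(τ,ξ,η) = ξ²(λ−τ²)² + (η(λ−τ²)+τ)²`. -/
noncomputable def Gamma (lam τ ξ η : ℝ) : ℝ :=
  ξ ^ 2 * (lam - τ ^ 2) ^ 2 + (η * (lam - τ ^ 2) + τ) ^ 2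

/-- for `λ ≥ λ₁ > 0` and `| |τ| − √λ | ≥ 10⁻³ √λ`, one has
`Γ_λ(τ,ξ,η) ≥ (2·10⁻³ − 10⁻⁶)² λ₁² ξ²`. -/
theorem stmt0 (lam1 : ℝ) (hlam1 : 0 < lam1) :
    ∀ lam τ ξ η : ℝ, lam1 ≤ lam →
      |(|τ| - Real.sqrt lam)| ≥ (1 / 1000) * Real.sqrt lam →
      Gamma lam τ ξ η ≥ (2 * (1 / 1000) - 1 / 1000000) ^ 2 * lam1 ^ 2 * ξ ^ 2 := by
  intro lam τ ξ η hl hτ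
  have hlam : 0 < lam := lt_of_lt_of_le hlam1 hl
  have hs : Real.sqrt lam ^ 2 = lam := Real.sq_sqrt hlam.le
  have hs0 : 0 < Real.sqrt lam := Real.sqrt_pos.mpr hlam
  have hτ2 : τ ^ 2 = |τ| ^ 2 := (sq_abs τ).symm
  have habs : (lam - τ ^ 2) ^ 2 ≥ ((1999:ℝ)/1000000) ^ 2 * lam ^ 2 := by
    rcases abs_cases (|τ| - Real.sqrt lam) with ⟨h1, _⟩ | ⟨h1, _⟩ <;> rw [h1] at hτ
    · have h3 : ((1001/1000) * Real.sqrt lam) ^ 2 ≤ |τ| ^ 2 :=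
        pow_le_pow_left₀ (by positivity) (by linarith) 2
      have h3' : (1002001/1000000 : ℝ) * lam ≤ |τ| ^ 2 := by nlinarith
      have h4 : lam - τ ^ 2 ≤ -(((1999:ℝ)/1000000) * lam) := by rw [hτ2]; linarith
      nlinarith [sq_nonneg (lam - τ ^ 2 + ((1999:ℝ)/1000000) * lam)]
    · have h3 : |τ| ^ 2 ≤ ((999/1000) * Real.sqrt lam) ^ 2 :=
        pow_le_pow_left₀ (abs_nonneg τ) (by linarith) 2
      have h3' : |τ| ^ 2 ≤ (998001/1000000 : ℝ) * lam := by nlinarith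
      have h4 : lam - τ ^ 2 ≥ ((1999:ℝ)/1000000) * lam := by rw [hτ2]; linarith
      nlinarith [sq_nonneg (lam - τ ^ 2 - ((1999:ℝ)/1000000) * lam)]
  have hll : lam1 ^ 2 ≤ lam ^ 2 := pow_le_pow_left₀ hlam1.le hl 2
  have h2 : Gamma lam τ ξ η ≥ ξ ^ 2 * (lam - τ ^ 2) ^ 2 := by
    unfold Gamma; nlinarith [sq_nonneg (η * (lam - τ ^ 2) + τ)]
  have key : ξ ^ 2 * ((1999/1000000 : ℝ) ^ 2 * lam ^ 2) ≥
      ((1999:ℝ)/1000000) ^ 2 * lam1 ^ 2 * ξ ^ 2 := by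
    have := mul_le_mul_of_nonneg_left hll
      (by positivity : (0:ℝ) ≤ ((1999:ℝ)/1000000) ^ 2 * ξ ^ 2)
    nlinarith [this]
  have h5 : ξ ^ 2 * (lam - τ ^ 2) ^ 2 ≥ ξ ^ 2 * ((1999/1000000 : ℝ) ^ 2 * lam ^ 2) :=
    mul_le_mul_of_nonneg_left habs (sq_nonneg ξ)
  have : Gamma lam τ ξ η ≥ ((1999:ℝ)/1000000) ^ 2 * lam1 ^ 2 * ξ ^ 2 := by linarith
  calc Gamma lam τ ξ η ≥ ((1999:ℝ)/1000000) ^ 2 * lam1 ^ 2 * ξ ^ 2 := this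
    _ = (2 * (1 / 1000) - 1 / 1000000) ^ 2 * lam1 ^ 2 * ξ ^ 2 := by norm_num
end

section
/- Let λ > 0 and let τ, ξ, η ∈ ℝ satisfy (1 − 10⁻³)·√λ ≤ |τ| ≤ (1 + 10⁻³)·√λ. Then Γ_λ(τ, ξ, η) ≥ (1 − 10⁻³)²·λ − 2·(1 + 10⁻³)·(2 + 10⁻³)·10⁻³·λ^{3/2}·|η|. -/
/-- for `λ > 0` and `(1−10⁻³)√λ ≤ |τ| ≤ (1+10⁻³)√λ`, one has
`Γ_λ(τ,ξ,η) ≥ (1−10⁻³)² λ − 2 (1+10⁻³)(2+10⁻³) 10⁻³ λ^{3/2} |η|`. -/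
theorem stmt1 (lam τ ξ η : ℝ) (hlam : 0 < lam)
    (hτ₁ : (1 - 1 / 1000) * Real.sqrt lam ≤ |τ|)
    (hτ₂ : |τ| ≤ (1 + 1 / 1000) * Real.sqrt lam) :
    Gamma lam τ ξ η ≥
      (1 - 1 / 1000) ^ 2 * lam
        - 2 * (1 + 1 / 1000) * (2 + 1 / 1000) * (1 / 1000) * lam ^ ((3 : ℝ) / 2) * |η| := by
  set s := Real.sqrt lam with hsdef
  have hs0 : 0 < s := Real.sqrt_pos.mpr hlam
  have hs2 : s ^ 2 = lam := Real.sq_sqrt hlam.le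
  have hrpow : lam ^ ((3 : ℝ) / 2) = s ^ 3 := by
    rw [show ((3 : ℝ) / 2) = (1 / 2) * (3 : ℕ) by norm_num,
      Real.rpow_mul hlam.le, Real.rpow_natCast, hsdef, ← Real.sqrt_eq_rpow]
  -- bounds on τ²
  have hτsq : τ ^ 2 = |τ| ^ 2 := (sq_abs τ).symm
  have habs0 : (0 : ℝ) ≤ |τ| := abs_nonneg τ
  have hlow : (1 - 1/1000) * s ≥ 0 := by positivity
  have hτ2low : ((1 - 1/1000) * s) ^ 2 ≤ τ ^ 2 := by
    rw [hτsq]; exact pow_le_pow_left₀ hlow hτ₁ 2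
  have hτ2high : τ ^ 2 ≤ ((1 + 1/1000) * s) ^ 2 := by
    rw [hτsq]; exact pow_le_pow_left₀ habs0 hτ₂ 2
  -- bound on |λ − τ²|
  have hD : |lam - τ ^ 2| ≤ (1/1000) * (2 + 1/1000) * s ^ 2 := by
    rw [abs_le]; constructor <;> nlinarith [sq_nonneg s]
  have h1 : |η * τ * (lam - τ ^ 2)| ≤
      |η| * ((1 + 1/1000) * s) * ((1/1000) * (2 + 1/1000) * s ^ 2) := by
    rw [abs_mul, abs_mul]
    gcongr <;> positivity
  have h2 : η * τ * (lam - τ ^ 2) ≥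
      -(|η| * ((1 + 1/1000) * s) * ((1/1000) * (2 + 1/1000) * s ^ 2)) := by
    have := neg_abs_le (η * τ * (lam - τ ^ 2))
    linarith
  rw [Gamma, hrpow]
  nlinarith [sq_nonneg (ξ * (lam - τ ^ 2)), sq_nonneg (η * (lam - τ ^ 2)),
    abs_nonneg η, hs0]
end

section
/- Let λ₁ > 0. For all real numbers λ ≥ λ₁ + 1 and all τ, ξ, η ∈ ℝ with |λ − τ²| ≤ 1 and |η| ≤ √λ₁/4, one has Γ_λ(τ, ξ, η) ≥ (λ − 1)/2; in particular Γ_λ(τ, ξ, η) ≥ λ₁/2. -/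
/-- for `λ ≥ λ₁ + 1` with `λ₁ > 0`, `|λ − τ²| ≤ 1` and `|η| ≤ √λ₁/4`,
one has `Γ_λ(τ,ξ,η) ≥ (λ−1)/2`, and in particular `Γ_λ(τ,ξ,η) ≥ λ₁/2`. -/
theorem stmt3 (lam1 : ℝ) (hlam1 : 0 < lam1) :
    ∀ lam τ ξ η : ℝ, lam1 + 1 ≤ lam →
      |lam - τ ^ 2| ≤ 1 →
      |η| ≤ Real.sqrt lam1 / 4 →
      Gamma lam τ ξ η ≥ (lam - 1) / 2 ∧ Gamma lam τ ξ η ≥ lam1 / 2 := by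
  intro lam τ ξ η hlam habs hη
  have hlam1le : lam1 ≤ lam - 1 := by linarith
  have h0 : (0:ℝ) ≤ lam - 1 := by linarith
  set s := Real.sqrt (lam - 1) with hs
  have hs0 : 0 ≤ s := Real.sqrt_nonneg _
  have hssq : s ^ 2 = lam - 1 := Real.sq_sqrt h0
  -- τ² ≥ λ - 1
  have hτ : lam - 1 ≤ τ ^ 2 := by
    have := (abs_le.mp habs).2
    linarith
  have hsτ : s ≤ |τ| := by
    have : s ≤ Real.sqrt (τ ^ 2) := Real.sqrt_le_sqrt hτ
    rwa [Real.sqrt_sq_eq_abs] at this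
  have hl1s : Real.sqrt lam1 ≤ s := Real.sqrt_le_sqrt hlam1le
  -- |η (λ - τ²)| ≤ s / 4
  have hsmall : |η * (lam - τ ^ 2)| ≤ s / 4 := by
    rw [abs_mul]
    calc |η| * |lam - τ ^ 2| ≤ (Real.sqrt lam1 / 4) * 1 := by
          apply mul_le_mul hη habs (abs_nonneg _) (by positivity)
      _ ≤ s / 4 := by linarith
  set a := η * (lam - τ ^ 2) + τ with ha
  have htri : |τ| ≤ |a| + |η * (lam - τ ^ 2)| := by
    have : τ = a - η * (lam - τ ^ 2) := by ring
    calc |τ| = |a - η * (lam - τ ^ 2)| := by rw [← this]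
      _ ≤ |a| + |η * (lam - τ ^ 2)| := abs_sub _ _
  have hla : 3 / 4 * s ≤ |a| := by linarith
  have hsq : (3 / 4 * s) ^ 2 ≤ a ^ 2 := by
    rw [← sq_abs a]
    exact pow_le_pow_left₀ (by positivity) hla 2
  have key : (lam - 1) / 2 ≤ a ^ 2 := by
    have : (3 / 4 * s) ^ 2 = 9 / 16 * (lam - 1) := by
      rw [mul_pow, hssq]; ring
    nlinarith
  have hξ : 0 ≤ ξ ^ 2 * (lam - τ ^ 2) ^ 2 := by positivity
  constructor
  · unfold Gamma; rw [← ha]; linarith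
  · unfold Gamma; rw [← ha]; linarith
end

section
/- Let λ₁ > 0. There exist constants C > 0 and ε₀ > 0 such that for all real λ ≥ λ₁, all τ ∈ ℝ, and all ξ, η ∈ ℝ with ξ² + η² ≤ ε₀², one has Γ_λ(τ, ξ, η) ≥ C·ξ². -/
/-- given `λ₁ > 0`, there are `C > 0` and `ε₀ > 0` such that for all
`λ ≥ λ₁`, all `τ ∈ ℝ` and all `ξ, η` with `ξ² + η² ≤ ε₀²`, one has
`Γ_λ(τ,ξ,η) ≥ C ξ²`. -/
theorem stmt4 (lam1 : ℝ) (hlam1 : 0 < lam1) :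
    ∃ C > (0 : ℝ), ∃ ε₀ > (0 : ℝ),
      ∀ lam τ ξ η : ℝ, lam1 ≤ lam → ξ ^ 2 + η ^ 2 ≤ ε₀ ^ 2 →
        Gamma lam τ ξ η ≥ C * ξ ^ 2 := by
  refine ⟨min (lam1 ^ 2 / 4) (lam1 / 8), ?_, 1, one_pos, ?_⟩
  · exact lt_min (by positivity) (by positivity)
  intro lam τ ξ η hl hξη
  have hξ2 : ξ ^ 2 ≤ 1 := by nlinarith [sq_nonneg η]
  have hη2 : η ^ 2 ≤ 1 := by nlinarith [sq_nonneg ξ]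
  set u := lam - τ ^ 2 with hu
  have hC1 : min (lam1 ^ 2 / 4) (lam1 / 8) ≤ lam1 ^ 2 / 4 := min_le_left _ _
  have hC2 : min (lam1 ^ 2 / 4) (lam1 / 8) ≤ lam1 / 8 := min_le_right _ _
  have hCpos : 0 < min (lam1 ^ 2 / 4) (lam1 / 8) :=
    lt_min (by positivity) (by positivity)
  unfold Gamma
  rw [← hu]
  clear_value u
  have hCx1 : min (lam1 ^ 2 / 4) (lam1 / 8) * ξ ^ 2 ≤ lam1 ^ 2 / 4 * ξ ^ 2 :=
    mul_le_mul_of_nonneg_right hC1 (sq_nonneg ξ)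
  have hCx2 : min (lam1 ^ 2 / 4) (lam1 / 8) * ξ ^ 2 ≤ lam1 / 8 * ξ ^ 2 :=
    mul_le_mul_of_nonneg_right hC2 (sq_nonneg ξ)
  have hx : lam1 / 8 * ξ ^ 2 ≤ lam1 / 8 := by nlinarith
  by_cases h1 : τ ^ 2 ≤ lam1 / 2
  · have hupos : lam1 / 2 ≤ u := by rw [hu]; linarith
    have hu2 : lam1 ^ 2 / 4 ≤ u ^ 2 := by nlinarith
    have : lam1 ^ 2 / 4 * ξ ^ 2 ≤ ξ ^ 2 * u ^ 2 := by nlinarith [sq_nonneg ξ]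
    nlinarith [sq_nonneg (η * u + τ)]
  · push_neg at h1
    by_cases h2 : (η * u) ^ 2 ≤ τ ^ 2 / 4
    · have : lam1 / 8 ≤ (η * u + τ) ^ 2 := by nlinarith [sq_nonneg (2 * (η * u) + τ)]
      nlinarith [mul_nonneg (sq_nonneg ξ) (sq_nonneg u)]
    · push_neg at h2
      have hu2 : lam1 / 8 ≤ u ^ 2 := by
        have hmono : η ^ 2 * u ^ 2 ≤ u ^ 2 :=
          mul_le_of_le_one_left (sq_nonneg u) hη2
        nlinarith [mul_pow η u 2]
      have hkey : lam1 / 8 * ξ ^ 2 ≤ ξ ^ 2 * u ^ 2 := by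
        calc lam1 / 8 * ξ ^ 2 = ξ ^ 2 * (lam1 / 8) := by ring
        _ ≤ ξ ^ 2 * u ^ 2 := mul_le_mul_of_nonneg_left hu2 (sq_nonneg ξ)
      linarith [sq_nonneg (η * u + τ)]
end

section
/- Let λ₁ > 0 and B ≥ 1. There exist constants C > 0 and σ₀ > 0 such that for all 0 < σ ≤ σ₀, every complex number ε = ξ + iη with ξ ≥ B·η² and σ ≤ |ε| ≤ 2σ, every real λ ≥ λ₁, and every τ ∈ ℝ, the complex number −τ² + iτ/ε + λ satisfies | −τ² + iτ/ε + λ | ≥ C·σ. -/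
set_option maxHeartbeats 2000000 in
/-- given `λ₁ > 0` and `B ≥ 1`, there exist `C > 0` and `σ₀ > 0` such
that for all `0 < σ ≤ σ₀`, every `ε = ξ + iη` with `ξ ≥ Bη²` and `σ ≤ |ε| ≤ 2σ`,
every `λ ≥ λ₁` and every `τ ∈ ℝ`, one has `|−τ² + iτ/ε + λ| ≥ C σ`. -/
theorem stmt6 (lam1 B : ℝ) (hlam1 : 0 < lam1) (hB : 1 ≤ B) :
    ∃ C > (0 : ℝ), ∃ σ₀ > (0 : ℝ),
      ∀ σ : ℝ, 0 < σ → σ ≤ σ₀ →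
        ∀ ξ η : ℝ, B * η ^ 2 ≤ ξ →
          σ ≤ ‖(ξ : ℂ) + (η : ℂ) * Complex.I‖ →
          ‖(ξ : ℂ) + (η : ℂ) * Complex.I‖ ≤ 2 * σ →
          ∀ lam : ℝ, lam1 ≤ lam → ∀ τ : ℝ,
            C * σ ≤ ‖-(τ : ℂ) ^ 2
              + Complex.I * (τ : ℂ) / ((ξ : ℂ) + (η : ℂ) * Complex.I) + (lam : ℂ)‖ := by
  have hB0 : (0:ℝ) < B := lt_of_lt_of_le one_pos hB
  refine ⟨lam1/6, by positivity, min (1/(2*B)) (B/(4*(1+lam1))), by positivity, ?_⟩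
  intro σ hσ hσ0 ξ η hBξ h1 h2 lam hlam τ
  have hσB : σ ≤ 1/(2*B) := le_trans hσ0 (min_le_left _ _)
  have hσL : σ ≤ B/(4*(1+lam1)) := le_trans hσ0 (min_le_right _ _)
  have h2Bσ : 2*B*σ ≤ 1 := by
    rw [le_div_iff₀ (by positivity)] at hσB; linarith
  have hs : σ*(4*(1+lam1)) ≤ B := by
    rw [le_div_iff₀ (by positivity)] at hσL; linarith
  set ε : ℂ := (ξ:ℂ) + (η:ℂ)*Complex.I with hε
  set z : ℂ := -(τ:ℂ)^2 + Complex.I * (τ:ℂ) / ε + (lam:ℂ) with hzdef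
  obtain ⟨ns, hns⟩ : ∃ x : ℝ, x = ξ^2 + η^2 := ⟨_, rfl⟩
  have habs2 : ‖ε‖^2 = ns := by
    rw [Complex.sq_norm, hε, hns]; simp [Complex.normSq_apply]; ring
  have hns1 : σ^2 ≤ ns := by
    rw [← habs2]; exact pow_le_pow_left₀ hσ.le h1 2
  have hns2 : ns ≤ 4*σ^2 := by
    rw [← habs2]; nlinarith [norm_nonneg ε]
  have hns0 : 0 < ns := lt_of_lt_of_le (by positivity) hns1
  have hξ0 : 0 ≤ ξ := le_trans (by positivity) hBξ
  have hns1' : σ^2 ≤ ξ^2 + η^2 := hns ▸ hns1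
  have hns2' : ξ^2 + η^2 ≤ 4*σ^2 := hns ▸ hns2
  have hξ2σ : ξ ≤ 2*σ := by nlinarith [hns1', hns2', sq_nonneg η]
  have hξlb : B*σ^2 ≤ 2*ξ := by
    nlinarith [hns1', hBξ, mul_le_mul_of_nonneg_left hξ2σ (mul_nonneg hB0.le hξ0),
      mul_le_mul_of_nonneg_left h2Bσ hξ0]
  have hεne : ε ≠ 0 := by
    intro h
    rw [h] at h1; simp at h1; linarith
  have hre : z.re = lam - τ^2 + τ*η/ns := by
    rw [hzdef, hε, hns]
    simp [Complex.div_re, Complex.normSq_apply, ← Complex.ofReal_pow]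
    ring
  have him : z.im = τ*ξ/ns := by
    rw [hzdef, hε, hns]
    simp [Complex.div_im, Complex.normSq_apply, ← Complex.ofReal_pow]
    ring
  have hre_le : |z.re| ≤ ‖z‖ := Complex.abs_re_le_norm z
  have him_le : |z.im| ≤ ‖z‖ := Complex.abs_im_le_norm z
  by_cases hc1 : τ^2 + |τ*η/ns| ≤ lam/2
  · -- real part large
    have h3 : lam1/2 ≤ z.re := by
      rw [hre]
      have := neg_abs_le (τ*η/ns)
      linarith
    have hσhalf : σ ≤ 1/2 := by nlinarith
    have h4 : lam1/6*σ ≤ lam1/2 := by nlinarith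
    calc lam1/6*σ ≤ lam1/2 := h4
      _ ≤ z.re := h3
      _ ≤ |z.re| := le_abs_self _
      _ ≤ ‖z‖ := hre_le
  · push_neg at hc1
    have hξsq : (B*σ^2)^2 ≤ (2*ξ)^2 := pow_le_pow_left₀ (by positivity) hξlb 2
    have hnssq : ns^2 ≤ (4*σ^2)^2 := pow_le_pow_left₀ hns0.le hns2 2
    have keysq : (lam1/6*σ*ns)^2 ≤ τ^2*ξ^2 := by
      by_cases hc2 : lam1/4 ≤ τ^2
      · have hs2 : (σ*(4*(1+lam1)))^2 ≤ B^2 := pow_le_pow_left₀ (by positivity) hs 2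
        have t1 : lam1/4*ξ^2 ≤ τ^2*ξ^2 := mul_le_mul_of_nonneg_right hc2 (sq_nonneg ξ)
        have t2 : B^2*σ^4 ≤ 4*ξ^2 := by nlinarith [hξsq]
        have t3 : 64*lam1*σ^2 ≤ B^2 := by
          nlinarith [hs2, mul_nonneg (sq_nonneg σ) (sq_nonneg (1-lam1))]
        have t4 : lam1*(B^2*σ^4) ≤ lam1*(4*ξ^2) := mul_le_mul_of_nonneg_left t2 hlam1.le
        have t5 : lam1*σ^4*(64*lam1*σ^2) ≤ lam1*σ^4*B^2 :=
          mul_le_mul_of_nonneg_left t3 (by positivity)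
        have t6 : lam1^2*σ^2*ns^2 ≤ lam1^2*σ^2*(16*σ^4) :=
          mul_le_mul_of_nonneg_left (by nlinarith [hnssq]) (by positivity)
        linarith only [t1, t4, t5, t6, mul_nonneg (sq_nonneg τ) (sq_nonneg ξ)]
      · push_neg at hc2
        have h5 : lam1/4 * ns < |τ*η| := by
          have h6 : lam1/2 - τ^2 < |τ*η/ns| := by linarith
          have h7 : lam1/4 < |τ*η|/ns := by
            rw [abs_div, abs_of_nonneg hns0.le] at h6
            linarith
          calc lam1/4*ns < |τ*η|/ns*ns := by nlinarith
            _ = |τ*η| := by field_simp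
        have h8 : η^2*B^2*σ^2 ≤ 2*ξ^2 := by
          nlinarith [mul_le_mul hBξ hξlb (by positivity) hξ0]
        have hnn : (0:ℝ) ≤ lam1/4*ns := le_of_lt (mul_pos (by positivity) hns0)
        have h5sq := pow_le_pow_left₀ hnn h5.le 2
        rw [sq_abs, mul_pow, mul_pow] at h5sq
        have u3 : τ^2*(η^2*B^2*σ^2) ≤ τ^2*(2*ξ^2) := mul_le_mul_of_nonneg_left h8 (sq_nonneg τ)
        have u4 : ((lam1/4)^2*ns^2)*(B^2*σ^2) ≤ (τ^2*η^2)*(B^2*σ^2) :=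
          mul_le_mul_of_nonneg_right h5sq (by positivity)
        have hB2 : (1:ℝ) ≤ B^2 := by
          calc (1:ℝ) = 1*1 := by ring
            _ ≤ B*B := mul_le_mul hB hB zero_le_one hB0.le
            _ = B^2 := (sq B).symm
        have u6 : ((lam1/4)^2*ns^2*σ^2)*1 ≤ ((lam1/4)^2*ns^2*σ^2)*B^2 :=
          mul_le_mul_of_nonneg_left hB2 (by positivity)
        linarith only [u3, u4, u6, mul_nonneg (sq_nonneg τ) (sq_nonneg ξ)]
    have key : lam1/6*σ*ns ≤ |τ*ξ| := by
      have habsnn : (0:ℝ) ≤ |τ*ξ| := abs_nonneg _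
      have hlhsnn : (0:ℝ) ≤ lam1/6*σ*ns := le_of_lt (mul_pos (mul_pos (by positivity) hσ) hns0)
      have hsq : (lam1/6*σ*ns)^2 ≤ |τ*ξ|^2 := by
        rw [sq_abs]; linarith only [keysq]
      have := Real.sqrt_le_sqrt hsq
      rwa [Real.sqrt_sq hlhsnn, Real.sqrt_sq habsnn] at this
    have h9 : lam1/6*σ ≤ |z.im| := by
      rw [him, abs_div, abs_of_nonneg hns0.le, le_div_iff₀ hns0]
      exact key
    linarith
end

section
/- Let λ₁ > 0 and μ₁ > 0. There exist constants C > 0 and ε₀ > 0 such that for all real λ ≥ λ₁, all real μ ≥ μ₁, all τ ∈ ℝ, and all ξ, η ∈ ℝ with ξ² + η² ≤ ε₀², one has ξ²·(λ − τ²)² + (η·(λ − τ²) + τ·μ)² ≥ C·ξ². -/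
private lemma stmt8_key (a b x m : ℝ) (h1 : a ^ 2 ≤ m / 4) (h2 : m ≤ b ^ 2)
    (h3 : x ≤ m / 4) : (a + b) ^ 2 ≥ x := by
  nlinarith [sq_nonneg (2 * a + b)]

/-- model A', uniform spectral bound: given `λ₁ > 0` and `μ₁ > 0`,
there exist `C > 0` and `ε₀ > 0` such that for all `λ ≥ λ₁`, `μ ≥ μ₁`, all `λ ≥ λ₁`, all `τ ∈ ℝ`
and all `ξ, η` with `ξ² + η² ≤ ε₀²`, one has
`ξ²(λ−τ²)² + (η(λ−τ²)+τμ)² ≥ C ξ²`. -/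
theorem stmt8 (lam1 μ1 : ℝ) (hlam1 : 0 < lam1) (hμ1 : 0 < μ1) :
    ∃ C > (0 : ℝ), ∃ ε₀ > (0 : ℝ),
      ∀ lam μ τ ξ η : ℝ, lam1 ≤ lam → μ1 ≤ μ → ξ ^ 2 + η ^ 2 ≤ ε₀ ^ 2 →
        ξ ^ 2 * (lam - τ ^ 2) ^ 2 + (η * (lam - τ ^ 2) + τ * μ) ^ 2 ≥ C * ξ ^ 2 := by
  have hm2 : (0:ℝ) < lam1 / 2 * μ1 ^ 2 := by positivity
  refine ⟨lam1 ^ 2 / 4, by positivity,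
    Real.sqrt (lam1 / 2 * μ1 ^ 2) / lam1, by positivity, ?_⟩
  intro lam μ τ ξ η hl hm hξη
  have hε2 : (Real.sqrt (lam1 / 2 * μ1 ^ 2) / lam1) ^ 2 =
      (lam1 / 2 * μ1 ^ 2) / lam1 ^ 2 := by
    rw [div_pow, Real.sq_sqrt hm2.le]
  rw [hε2] at hξη
  by_cases h : lam1 ^ 2 / 4 ≤ (lam - τ ^ 2) ^ 2
  · nlinarith [mul_le_mul_of_nonneg_left h (sq_nonneg ξ),
      sq_nonneg (η * (lam - τ ^ 2) + τ * μ)]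
  · push_neg at h
    have hA : |lam - τ ^ 2| < lam1 / 2 := by
      rw [abs_lt]; constructor <;> nlinarith
    have hτ : lam1 / 2 ≤ τ ^ 2 := by
      rcases abs_lt.mp hA with ⟨h1, h2⟩; nlinarith
    have hμ2 : μ1 ^ 2 ≤ μ ^ 2 := by nlinarith
    have hτμ : lam1 / 2 * μ1 ^ 2 ≤ τ ^ 2 * μ ^ 2 :=
      mul_le_mul hτ hμ2 (by positivity) (sq_nonneg τ)
    have hη2 : η ^ 2 ≤ (lam1 / 2 * μ1 ^ 2) / lam1 ^ 2 := by nlinarith [sq_nonneg ξ]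
    have hξ2 : ξ ^ 2 ≤ (lam1 / 2 * μ1 ^ 2) / lam1 ^ 2 := by nlinarith [sq_nonneg η]
    have hkey : lam1 / 2 * μ1 ^ 2 / lam1 ^ 2 * (lam1 ^ 2 / 4) = lam1 / 2 * μ1 ^ 2 / 4 := by
      field_simp
    have hηA : η ^ 2 * (lam - τ ^ 2) ^ 2 ≤ lam1 / 2 * μ1 ^ 2 / 4 := by
      calc η ^ 2 * (lam - τ ^ 2) ^ 2
          ≤ lam1 / 2 * μ1 ^ 2 / lam1 ^ 2 * (lam1 ^ 2 / 4) :=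
            mul_le_mul hη2 h.le (sq_nonneg _) (by positivity)
        _ = lam1 / 2 * μ1 ^ 2 / 4 := hkey
    have h3 : lam1 ^ 2 / 4 * ξ ^ 2 ≤ lam1 / 2 * μ1 ^ 2 / 4 := by
      have := mul_le_mul_of_nonneg_left hξ2 (by positivity : (0:ℝ) ≤ lam1 ^ 2 / 4)
      calc lam1 ^ 2 / 4 * ξ ^ 2 ≤ lam1 ^ 2 / 4 * ((lam1 / 2 * μ1 ^ 2) / lam1 ^ 2) := this
        _ = lam1 / 2 * μ1 ^ 2 / 4 := by field_simp
    have h4 := stmt8_key (η * (lam - τ ^ 2)) (τ * μ) (lam1 ^ 2 / 4 * ξ ^ 2)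
      (lam1 / 2 * μ1 ^ 2) (by rw [mul_pow]; exact hηA) (by rw [mul_pow]; exact hτμ)
      (by linarith)
    linarith [mul_nonneg (sq_nonneg ξ) (sq_nonneg (lam - τ ^ 2)), h4]
end

section
/- Let λ₁ > 0, μ₁ > 0 and B ≥ 1. There exist constants C > 0 and σ₀ > 0 such that for all 0 < σ ≤ σ₀, every complex number ε = ξ + iη with ξ ≥ B·η² and σ ≤ |ε| ≤ 2σ, every real λ ≥ λ₁, every real μ ≥ μ₁, and every τ ∈ ℝ, one has | −τ² + (iτ/ε)·μ + λ | ≥ C·σ. -/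
set_option maxHeartbeats 1000000 in
/-- model A', eigenvalue bound on the parabolic domain: given
`λ₁ > 0`, `μ₁ > 0` and `B ≥ 1`, there exist `C > 0` and `σ₀ > 0` such that for all
`0 < σ ≤ σ₀`, every `ε = ξ + iη` with `ξ ≥ Bη²` and `σ ≤ |ε| ≤ 2σ`, every
`λ ≥ λ₁`, every `μ ≥ μ₁` and every `τ ∈ ℝ`, one has `|−τ² + (iτ/ε)μ + λ| ≥ C σ`. -/
theorem stmt9 (lam1 μ1 B : ℝ) (hlam1 : 0 < lam1) (hμ1 : 0 < μ1) (hB : 1 ≤ B) :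
    ∃ C > (0 : ℝ), ∃ σ₀ > (0 : ℝ),
      ∀ σ : ℝ, 0 < σ → σ ≤ σ₀ →
        ∀ ξ η : ℝ, B * η ^ 2 ≤ ξ →
          σ ≤ ‖((ξ : ℂ) + (η : ℂ) * Complex.I)‖ →
          ‖((ξ : ℂ) + (η : ℂ) * Complex.I)‖ ≤ 2 * σ →
          ∀ lam μ : ℝ, lam1 ≤ lam → μ1 ≤ μ → ∀ τ : ℝ,
            C * σ ≤ ‖(-(τ : ℂ) ^ 2
              + Complex.I * (τ : ℂ) / ((ξ : ℂ) + (η : ℂ) * Complex.I) * (μ : ℂ)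
              + (lam : ℂ))‖ := by
  have hs : 0 < Real.sqrt (lam1/2) := Real.sqrt_pos.mpr (by linarith)
  refine ⟨lam1/8, by positivity, min 1 (Real.sqrt (lam1/2) * μ1 / lam1), by positivity, ?_⟩
  intro σ hσ hσ0 ξ η hξη h1 h2 lam μ hlam hμ τ
  set z : ℂ := -(τ : ℂ) ^ 2
              + Complex.I * (τ : ℂ) / ((ξ : ℂ) + (η : ℂ) * Complex.I) * (μ : ℂ)
              + (lam : ℂ) with hzdef
  clear_value z
  have hσ1 : σ ≤ 1 := hσ0.trans (min_le_left _ _)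
  have hσ2 : σ ≤ Real.sqrt (lam1/2) * μ1 / lam1 := hσ0.trans (min_le_right _ _)
  have hμpos : (0:ℝ) < μ := lt_of_lt_of_le hμ1 hμ
  set r : ℝ := ξ^2 + η^2 with hrdef
  clear_value r
  have hη2 : η^2 ≤ ξ := le_trans (by nlinarith [sq_nonneg η]) hξη
  have hξ0 : 0 ≤ ξ := le_trans (sq_nonneg η) hη2
  have habs : ‖((ξ : ℂ) + (η : ℂ) * Complex.I)‖ = Real.sqrt r := by
    rw [hrdef, Complex.norm_def, Complex.normSq_add_mul_I]
  have hr0 : 0 ≤ r := by rw [hrdef]; positivity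
  have hsq : Real.sqrt r ^ 2 = r := Real.sq_sqrt hr0
  rw [habs] at h1 h2
  have hr1 : σ^2 ≤ r := by nlinarith
  have hr2 : r ≤ 4*σ^2 := by nlinarith [Real.sqrt_nonneg r]
  have hrpos : 0 < r := lt_of_lt_of_le (by positivity) hr1
  have hσsq : σ^2 ≤ 1 := by nlinarith
  have hξσ : σ^2/2 ≤ ξ := by
    by_contra hc
    push_neg at hc
    nlinarith [mul_lt_mul'' hc hc hξ0 hξ0, hσsq]
  have hξpos : 0 < ξ := lt_of_lt_of_le (by positivity) hξσ
  have hτre : (((τ:ℂ))^2).re = τ^2 := by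
    rw [show ((τ:ℂ))^2 = ((τ^2 : ℝ) : ℂ) by push_cast; ring, Complex.ofReal_re]
  have hτim : (((τ:ℂ))^2).im = 0 := by
    rw [show ((τ:ℂ))^2 = ((τ^2 : ℝ) : ℂ) by push_cast; ring, Complex.ofReal_im]
  have hre : z.re = lam - τ^2 + μ*τ*η/r := by
    rw [hzdef]
    simp [Complex.div_re, Complex.div_im, Complex.normSq_add_mul_I, hτre, hτim, ← hrdef]
    ring
  have him : z.im = μ*τ*ξ/r := by
    rw [hzdef]
    simp [Complex.div_re, Complex.div_im, Complex.normSq_add_mul_I, hτre, hτim, ← hrdef]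
    ring
  by_cases hY : lam1/8 * σ ≤ |z.im|
  · exact hY.trans (Complex.abs_im_le_norm z)
  push_neg at hY
  rw [him] at hY
  have habs' : |μ*τ*ξ/r| = |τ| * μ * (ξ/r) := by
    rw [abs_div, abs_mul, abs_mul, abs_of_pos hrpos, abs_of_nonneg hξ0, abs_of_pos hμpos]
    ring
  have hYnn : |τ| * μ * (ξ/r) < lam1/8 * σ := by rw [← habs']; exact hY
  -- τ² ≤ lam1/2
  have hτ : τ^2 ≤ lam1/2 := by
    by_contra hτ'
    push_neg at hτ'
    have hτabs : Real.sqrt (lam1/2) ≤ |τ| := by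
      have := Real.sqrt_le_sqrt hτ'.le
      rwa [Real.sqrt_sq_eq_abs] at this
    have h8 : 1/8 ≤ ξ/r := by
      rw [le_div_iff₀ hrpos]; linarith
    have hbig : Real.sqrt (lam1/2) * μ1 * (1/8) ≤ |τ| * μ * (ξ/r) :=
      mul_le_mul (mul_le_mul hτabs hμ (le_of_lt hμ1) (abs_nonneg τ)) h8 (by norm_num)
        (by positivity)
    have hCσ : lam1/8 * σ ≤ Real.sqrt (lam1/2) * μ1 * (1/8) := by
      rw [le_div_iff₀ hlam1] at hσ2
      linarith
    linarith
  -- cross term bound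
  have hX : |τ| * μ / r * ξ < lam1/8 * σ := by
    have e : |τ| * μ / r * ξ = |τ| * μ * (ξ/r) := by ring
    rw [e]; exact hYnn
  have hX2 : |τ| * μ / r ≤ lam1/(4*σ) := by
    have e3 : lam1/8 * σ / (σ^2/2) = lam1/(4*σ) := by
      field_simp
      ring
    rw [← e3, le_div_iff₀ (by positivity)]
    calc |τ| * μ / r * (σ^2/2) ≤ |τ| * μ / r * ξ := by
          apply mul_le_mul_of_nonneg_left hξσ (by positivity)
      _ ≤ lam1/8 * σ := hX.le
  have hsq' : (μ*τ*η/r)^2 ≤ (lam1/4)^2 := by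
    have e2 : (μ*τ*η/r)^2 = (|τ| * μ / r)^2 * η^2 := by
      simp only [div_pow, mul_pow, sq_abs]
      ring
    rw [e2]
    have hXnn : 0 ≤ |τ| * μ / r := by positivity
    calc (|τ| * μ / r)^2 * η^2 ≤ (|τ| * μ / r)^2 * ξ := by
          apply mul_le_mul_of_nonneg_left hη2 (by positivity)
      _ = (|τ| * μ / r * ξ) * (|τ| * μ / r) := by ring
      _ ≤ (lam1/8 * σ) * (lam1/(4*σ)) := by
          apply mul_le_mul hX.le hX2 hXnn (by positivity)
      _ = lam1^2/32 := by field_simp; ring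
      _ ≤ (lam1/4)^2 := by nlinarith
  have hcross : |μ*τ*η/r| ≤ lam1/4 := by
    nlinarith [hsq', abs_nonneg (μ*τ*η/r), sq_abs (μ*τ*η/r)]
  have hrebig : lam1/4 ≤ z.re := by
    rw [hre]
    have : -(lam1/4) ≤ μ*τ*η/r := neg_le_of_abs_le hcross
    linarith
  calc lam1/8 * σ ≤ lam1/4 := by nlinarith
    _ ≤ z.re := hrebig
    _ ≤ |z.re| := le_abs_self _
    _ ≤ ‖z‖ := Complex.abs_re_le_norm z
end

section
/- Let λ₁ > 0. For every real λ ≥ λ₁, every ξ ∈ ℝ with ξ⁴ ≤ 1/4, and every τ ∈ ℝ, one has (λ − ξ²·τ²)² + τ² ≥ min(λ₁², 1). -/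
/-- model B, real `ε`, uniform bound: for `λ₁ > 0`, every
`λ ≥ λ₁`, every `ξ` with `ξ⁴ ≤ 1/4` and every `τ ∈ ℝ`,
one has `(λ − ξ²τ²)² + τ² ≥ min (λ₁², 1)`. -/
theorem stmt13 (lam1 : ℝ) (hlam1 : 0 < lam1) :
    ∀ lam ξ τ : ℝ, lam1 ≤ lam → ξ ^ 4 ≤ 1 / 4 →
      (lam - ξ ^ 2 * τ ^ 2) ^ 2 + τ ^ 2 ≥ min (lam1 ^ 2) 1 := by
  intro lam ξ τ hlam hξ
  rcases le_or_gt (2 * lam * ξ ^ 2) 1 with h | h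
  · -- min value at τ = 0: bound below by lam² ≥ lam1²
    have h1 : min (lam1 ^ 2) 1 ≤ lam1 ^ 2 := min_le_left _ _
    have h2 : lam1 ^ 2 ≤ lam ^ 2 := by nlinarith
    nlinarith [sq_nonneg τ, sq_nonneg (ξ ^ 2 * τ), mul_nonneg (sq_nonneg τ) (sq_nonneg (ξ ^ 2 * τ))]
  · -- here 2λξ² > 1 so ξ ≠ 0 and the min over τ is > 1
    have hξ2 : 0 < ξ ^ 2 := by nlinarith
    have h1 : min (lam1 ^ 2) 1 ≤ 1 := min_le_right _ _
    have key : (lam - ξ ^ 2 * τ ^ 2) ^ 2 + τ ^ 2 ≥ 1 := by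
      have hsq := sq_nonneg (2 * ξ ^ 2 * (lam - ξ ^ 2 * τ ^ 2) - 1)
      have h4 : (0:ℝ) < 4 * ξ ^ 4 := by nlinarith [mul_pos hξ2 hξ2]
      nlinarith [sq_nonneg ξ, mul_pos hξ2 hξ2]
    linarith
end

section
/- Let λ₁ > 0 and 0 < δ ≤ 1/4. For every complex ε belonging to Ω_δ := { ε ∈ ℂ : Re(−ε²) ≥ δ } ∪ { ε ∈ ℝ : δ < |ε| < 2δ }, every real λ ≥ λ₁, and every τ ∈ ℝ, one has | −ε²·τ² + i·τ + λ | ≥ min(λ₁, 1). -/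
/-- model B, uniform spectral bound on `Ω_δ`: for `λ₁ > 0` and
`0 < δ ≤ 1/4`, every `ε` in
`Ω_δ = {ε : Re(−ε²) ≥ δ} ∪ {ε real : δ < |ε| < 2δ}`, every `λ ≥ λ₁` and every
`τ ∈ ℝ` satisfy `|−ε²τ² + iτ + λ| ≥ min(λ₁, 1)`. -/
theorem stmt14 (lam1 δ : ℝ) (hlam1 : 0 < lam1) (hδ : 0 < δ) (hδ' : δ ≤ 1 / 4) :
    ∀ ε : ℂ,
      (δ ≤ (-ε ^ 2).re ∨ (ε.im = 0 ∧ δ < ‖ε‖ ∧ ‖ε‖ < 2 * δ)) →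
      ∀ lam : ℝ, lam1 ≤ lam → ∀ τ : ℝ,
        min lam1 1 ≤ ‖-ε ^ 2 * (τ : ℂ) ^ 2 + Complex.I * (τ : ℂ) + (lam : ℂ)‖ := by
  intro ε hε lam hlam τ
  have hm1 : min lam1 1 ≤ 1 := min_le_right _ _
  have hmlam : min lam1 1 ≤ lam1 := min_le_left _ _
  have hm0 : 0 < min lam1 1 := lt_min hlam1 one_pos
  set z : ℂ := -ε ^ 2 * (τ : ℂ) ^ 2 + Complex.I * (τ : ℂ) + (lam : ℂ) with hz
  rcases hε with h | ⟨him, hlo, hhi⟩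
  · have hre : z.re = (-ε ^ 2).re * τ ^ 2 + lam := by
      simp [hz, Complex.add_re, Complex.mul_re, pow_two]
      ring
    have h1 : min lam1 1 ≤ z.re := by
      rw [hre]
      nlinarith [mul_nonneg (le_trans hδ.le h) (sq_nonneg τ)]
    exact h1.trans (Complex.re_le_norm z)
  · -- ε real
    have habs : ‖ε‖ = |ε.re| := by
      rw [Complex.norm_def, Complex.normSq_apply, him]
      rw [mul_zero, add_zero, ← pow_two, Real.sqrt_sq_eq_abs]
    rw [habs] at hlo hhi
    have hb1 : δ ^ 2 < ε.re ^ 2 := by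
      have := sq_lt_sq' (by linarith [abs_nonneg ε.re, neg_abs_le ε.re] : -|ε.re| < δ) hlo
      simpa [sq_abs] using this.trans_le (le_of_eq (sq_abs ε.re))
    have hb2 : ε.re ^ 2 ≤ 4 * δ ^ 2 := by
      have h0 : |ε.re| ≤ 2 * δ := hhi.le
      nlinarith [abs_nonneg ε.re, sq_abs ε.re]
    have hre : z.re = lam - ε.re ^ 2 * τ ^ 2 := by
      simp [hz, Complex.add_re, Complex.mul_re, Complex.mul_im, him, pow_two]
      ring
    have him2 : z.im = τ := by
      simp [hz, Complex.add_im, Complex.mul_im, Complex.mul_re, him, pow_two]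
    set b : ℝ := ε.re ^ 2 * τ ^ 2 with hbdef
    have hb0 : 0 ≤ b := mul_nonneg (sq_nonneg _) (sq_nonneg _)
    have h4b : 4 * b ≤ τ ^ 2 := by
      have : ε.re ^ 2 ≤ 1 / 4 := by nlinarith
      nlinarith [sq_nonneg τ]
    have hsq : (‖z‖) ^ 2 = (lam - b) ^ 2 + τ ^ 2 := by
      rw [Complex.sq_norm, Complex.normSq_apply, hre, him2]
      ring
    have hkey : (min lam1 1) ^ 2 + 4 * b ≤ (lam - b) ^ 2 + 4 * b + 4 * b := by
      have hmlam' : min lam1 1 ≤ lam := hmlam.trans hlam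
      rcases le_or_gt lam 2 with h2 | h2
      · nlinarith [mul_nonneg hb0 (by linarith : (0:ℝ) ≤ b + 4 - 2 * lam)]
      · nlinarith [sq_nonneg (b - lam + 2)]
    have hfin : (min lam1 1) ^ 2 ≤ (‖z‖) ^ 2 := by
      rw [hsq]; nlinarith
    have := Real.sqrt_le_sqrt hfin
    rwa [Real.sqrt_sq hm0.le, Real.sqrt_sq (norm_nonneg z)] at this
end

section
/- Let d ≥ 1, ρ > 0 and M ≥ 1, and let ω ∈ ℝ^d satisfy the non-resonance condition |ω·k| ≥ e^{−2πρ|k|/M} for all k ∈ ℤ^d \ {0}, where |k| = |k₁| + ⋯ + |k_d|. Let g : ℤ^d → ℂ satisfy g(0) = 0 and Σ_{k ∈ ℤ^d} e^{4π|k|ρ}·|g(k)|² < ∞. Define u : ℤ^d → ℂ by u(0) = 0 and u(k) = g(k)/(2πi·ω·k) for k ≠ 0, and set ρ' = ρ·(1 − 1/M). Then Σ_{k ∈ ℤ^d} e^{4π|k|ρ'}·|u(k)|² ≤ (2π)⁻²·Σ_{k ∈ ℤ^d} e^{4π|k|ρ}·|g(k)|² < ∞. -/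
open Real

/-- small-divisor step of the Lindstedt procedure, in Fourier
coefficients: if `ω` satisfies `|ω·k| ≥ e^{−2πρ|k|/M}` for all `k ≠ 0`, `g` has
zero mean (`g 0 = 0`) and finite weighted norm `Σ e^{4π|k|ρ} |g k|² < ∞`, then
`u k = g k / (2πi ω·k)` (with `u 0 = 0`) has finite weighted norm on the shrunken
strip `ρ' = ρ(1 − 1/M)`, with
`Σ e^{4π|k|ρ'} |u k|² ≤ (2π)⁻² Σ e^{4π|k|ρ} |g k|²`. -/
theorem stmt15 (d : ℕ) (hd : 1 ≤ d) (ρ : ℝ) (hρ : 0 < ρ) (M : ℝ) (hM : 1 ≤ M)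
    (ω : Fin d → ℝ)
    (hω : ∀ k : Fin d → ℤ, k ≠ 0 →
      Real.exp (-(2 * π * ρ * (∑ i, |(k i : ℝ)|)) / M) ≤ |∑ i, ω i * (k i : ℝ)|)
    (g : (Fin d → ℤ) → ℂ) (hg0 : g 0 = 0)
    (hg : Summable (fun k : Fin d → ℤ =>
      Real.exp (4 * π * (∑ i, |(k i : ℝ)|) * ρ) * ‖g k‖ ^ 2))
    (u : (Fin d → ℤ) → ℂ) (hu0 : u 0 = 0)
    (hu : ∀ k : Fin d → ℤ, k ≠ 0 →
      u k = g k / (2 * π * Complex.I * (∑ i, (ω i : ℂ) * (k i : ℂ))))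
    (ρ' : ℝ) (hρ' : ρ' = ρ * (1 - 1 / M)) :
    Summable (fun k : Fin d → ℤ =>
      Real.exp (4 * π * (∑ i, |(k i : ℝ)|) * ρ') * ‖u k‖ ^ 2) ∧
    (∑' k : Fin d → ℤ, Real.exp (4 * π * (∑ i, |(k i : ℝ)|) * ρ') * ‖u k‖ ^ 2) ≤
      ((2 * π) ^ 2)⁻¹ *
        ∑' k : Fin d → ℤ, Real.exp (4 * π * (∑ i, |(k i : ℝ)|) * ρ) * ‖g k‖ ^ 2 := by
  have hπ : (0:ℝ) < π := Real.pi_pos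
  have hM0 : (0:ℝ) < M := lt_of_lt_of_le one_pos hM
  have key : ∀ k : Fin d → ℤ,
      Real.exp (4 * π * (∑ i, |(k i : ℝ)|) * ρ') * ‖u k‖ ^ 2 ≤
      ((2 * π) ^ 2)⁻¹ *
        (Real.exp (4 * π * (∑ i, |(k i : ℝ)|) * ρ) * ‖g k‖ ^ 2) := by
    intro k
    by_cases hk : k = 0
    · subst hk
      simp [hu0, hg0]
    · have hωk := hω k hk
      set A := ∑ i, |(k i : ℝ)| with hA
      set s := ∑ i, ω i * (k i : ℝ) with hs
      have hApos : 0 ≤ A := Finset.sum_nonneg fun i _ => abs_nonneg _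
      have hspos : 0 < |s| := lt_of_lt_of_le (Real.exp_pos _) hωk
      have hcast : (∑ i, (ω i : ℂ) * (k i : ℂ)) = (s : ℂ) := by
        rw [hs]; push_cast; ring
      have hnorm : ‖(2 * π * Complex.I * (∑ i, (ω i : ℂ) * (k i : ℂ)))‖
          = 2 * π * |s| := by
        rw [hcast]
        simp [Complex.norm_real, abs_of_pos hπ, Real.norm_eq_abs, mul_assoc]
      have h2 : Real.exp (-(4 * π * A * ρ) / M) ≤ |s| ^ 2 := by
        have : Real.exp (-(2 * π * ρ * A) / M) ^ 2 = Real.exp (-(4 * π * A * ρ) / M) := by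
          rw [sq, ← Real.exp_add]; ring_nf
        rw [← this]
        exact pow_le_pow_left₀ (Real.exp_pos _).le hωk 2
      have hexp : Real.exp (4 * π * A * ρ') ≤ Real.exp (4 * π * A * ρ) * |s| ^ 2 := by
        calc Real.exp (4 * π * A * ρ')
            = Real.exp (4 * π * A * ρ) * Real.exp (-(4 * π * A * ρ) / M) := by
              rw [← Real.exp_add]; congr 1; rw [hρ']; field_simp; ring
          _ ≤ Real.exp (4 * π * A * ρ) * |s| ^ 2 :=
              mul_le_mul_of_nonneg_left h2 (Real.exp_pos _).le
      rw [hu k hk, norm_div, hnorm, div_pow]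
      have hgnn : (0:ℝ) ≤ ‖g k‖ ^ 2 := sq_nonneg _
      have hmul := mul_le_mul_of_nonneg_right hexp hgnn
      have hc : ((2 * π) ^ 2)⁻¹ * (2 * π) ^ 2 = 1 := by
        rw [inv_mul_cancel₀]; positivity
      calc Real.exp (4 * π * A * ρ') * (‖g k‖ ^ 2 / (2 * π * |s|) ^ 2)
          = Real.exp (4 * π * A * ρ') * ‖g k‖ ^ 2 / ((2 * π) ^ 2 * |s| ^ 2) := by
            rw [mul_pow]; ring
        _ ≤ Real.exp (4 * π * A * ρ) * |s| ^ 2 * ‖g k‖ ^ 2 / ((2 * π) ^ 2 * |s| ^ 2) := by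
            apply div_le_div_of_nonneg_right ?_ (by positivity)
            · exact hmul
        _ = ((2 * π) ^ 2)⁻¹ * (Real.exp (4 * π * A * ρ) * ‖g k‖ ^ 2) := by
            rw [eq_comm, inv_mul_eq_div, div_eq_div_iff (by positivity) (by positivity)]
            ring
  have hnn : ∀ k : Fin d → ℤ,
      0 ≤ Real.exp (4 * π * (∑ i, |(k i : ℝ)|) * ρ') * ‖u k‖ ^ 2 := by
    intro k; positivity
  have hsum2 : Summable (fun k : Fin d → ℤ =>
      ((2 * π) ^ 2)⁻¹ *
        (Real.exp (4 * π * (∑ i, |(k i : ℝ)|) * ρ) * ‖g k‖ ^ 2)) := hg.mul_left _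
  have hsum : Summable (fun k : Fin d → ℤ =>
      Real.exp (4 * π * (∑ i, |(k i : ℝ)|) * ρ') * ‖u k‖ ^ 2) :=
    Summable.of_nonneg_of_le hnn key hsum2
  refine ⟨hsum, ?_⟩
  calc (∑' k : Fin d → ℤ, Real.exp (4 * π * (∑ i, |(k i : ℝ)|) * ρ') * ‖u k‖ ^ 2)
      ≤ ∑' k : Fin d → ℤ, ((2 * π) ^ 2)⁻¹ *
          (Real.exp (4 * π * (∑ i, |(k i : ℝ)|) * ρ) * ‖g k‖ ^ 2) :=
        Summable.tsum_le_tsum key hsum hsum2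
    _ = ((2 * π) ^ 2)⁻¹ *
        ∑' k : Fin d → ℤ, Real.exp (4 * π * (∑ i, |(k i : ℝ)|) * ρ) * ‖g k‖ ^ 2 :=
        tsum_mul_left
end
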